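/- Let d_I > 0. Suppose (μ_p, φ) with φ ∈ L²(Ω), φ > 0 almost everywhere, satisfies the weighted eigenvalue problem −d_I ∫_Ω J(x−y)(φ(y)−φ(x)) dy + γ(x) φ(x) = μ_p β(x) φ(x) for almost every x ∈ Ω. Then: (a) μ_p > 0; (b) μ_p is the unique such eigenvalue, i.e. if (μ₁, φ₁) and (μ₂, φ₂) are two pairs with positive eigenfunctions solving this problem, then μ₁ = μ₂; (c) μ_p admits the variational characterization μ_p = inf over nonzero ψ ∈ L²(Ω) of [ (d_I/2) ∫_Ω ∫_Ω J(x−y)(ψ(y)−ψ(x))² dy dx + ∫_Ω γ(x) ψ(x)² dx ] / ∫_Ω β(x) ψ(x)² dx. -/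

import Mathlib

/-!
Write `L f (x) = ∫_Ω J(x-y) (f(y) - f(x)) dy` and `E(f, g) = ∫∫ J(x-y) (f(y)-f(x)) (g(y)-g(x))`.
Since `J` is even, Fubini gives the nonlocal Green formula `∫ (L f) g = -E(f, g) / 2`.
Testing the equation of an eigenpair `(μ, φ)` against `g` therefore gives
`μ ∫ β φ g = (d/2) E(φ, g) + ∫ γ φ g`. With `g = φ` this shows `μ > 0` and that `μ` is the
Rayleigh quotient of `φ`; with two positive eigenpairs the symmetry of `E` and `∫ β φ₁ φ₂ > 0`
force `μ₁ = μ₂`.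

For the lower bound on the Rayleigh quotient, `φ > 0` acts as a ground state: if
`∫ J(x-y) φ(y) dy = h(x) φ(x)`, integrating `2 a b ≤ a² φ(y)/φ(x) + b² φ(x)/φ(y)` against
`J(x-y)` gives `∫∫ J(x-y) ψ(x) ψ(y) ≤ ∫ h ψ²`, i.e. `∫ (L ψ) ψ ≤ ∫ q ψ²` whenever `L φ = q φ`.
For the eigenfunction, `q = (γ - μ β)/d`, which is exactly `μ ∫ β ψ² ≤ (d/2) E(ψ, ψ) + ∫ γ ψ²`.
-/

open MeasureTheory Set Filter Topology

noncomputable section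

abbrev Euc (n : ℕ) := EuclideanSpace ℝ (Fin n)

/-- Ω is a bounded domain. -/
def DomainHyp {n : ℕ} (Ω : Set (Euc n)) : Prop :=
  IsOpen Ω ∧ IsConnected Ω ∧ Bornology.IsBounded Ω

/-- Hypotheses (J) on the dispersal kernel. -/
def KernelHyp {n : ℕ} (J : Euc n → ℝ) (Ω : Set (Euc n)) : Prop :=
  Continuous J ∧ 0 < J 0 ∧ (∀ x, J (-x) = J x) ∧ (∀ x, 0 ≤ J x) ∧
    (∫ x, J x) = 1 ∧ ¬ (∀ x ∈ Ω, (∫ y in Ω, J (x - y)) = 1)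

/-- positive continuous rate function on the closure of Ω. -/
def RateHyp {n : ℕ} (Ω : Set (Euc n)) (f : Euc n → ℝ) : Prop :=
  ContinuousOn f (closure Ω) ∧ ∀ x ∈ closure Ω, 0 < f x

/-- The set of Rayleigh quotients over nonzero φ ∈ L²(Ω). -/
def rayleighSet {n : ℕ} (J : Euc n → ℝ) (Ω : Set (Euc n)) (β γ : Euc n → ℝ) (d : ℝ) :
    Set ℝ :=
  { r | ∃ φ : Euc n → ℝ, MemLp φ 2 (volume.restrict Ω) ∧
      ¬ (∀ᵐ x ∂(volume.restrict Ω), φ x = 0) ∧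
      r = (d / 2 * (∫ x in Ω, ∫ y in Ω, J (x - y) * (φ y - φ x) ^ 2)
            + ∫ x in Ω, (γ x - β x) * φ x ^ 2) / (∫ x in Ω, φ x ^ 2) }

/-- λ_p(d). -/
def lambdaP {n : ℕ} (J : Euc n → ℝ) (Ω : Set (Euc n)) (β γ : Euc n → ℝ) (d : ℝ) : ℝ :=
  sInf (rayleighSet J Ω β γ d)

/-- `lam` is a principal eigenvalue of `M_d`. -/
def IsPrincipalEigen {n : ℕ} (J : Euc n → ℝ) (Ω : Set (Euc n)) (β γ : Euc n → ℝ)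
    (d lam : ℝ) : Prop :=
  ∃ φ : Euc n → ℝ, ContinuousOn φ (closure Ω) ∧ (∀ x ∈ closure Ω, 0 < φ x) ∧
    ∀ x ∈ Ω, d * (∫ y in Ω, J (x - y) * (φ y - φ x)) + (β x - γ x) * φ x = -lam * φ x

open Function
open scoped ENNReal

lemma MeasureTheory.MemLp.ae_norm_le_of_top {α E : Type*} [MeasurableSpace α] {μ : Measure α}
    [NormedAddCommGroup E] {f : α → E} (hf : MemLp f ∞ μ) :
    ∀ᵐ x ∂μ, ‖f x‖ ≤ (eLpNorm f ∞ μ).toReal := by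
  filter_upwards [ae_le_eLpNormEssSup (f := f) (μ := μ)] with x hx
  rw [eLpNorm_exponent_top, ← ofReal_norm] at *
  exact (ENNReal.ofReal_le_iff_le_toReal hf.2.ne).1 hx

lemma two_mul_le_mul_sq_div_add_mul_sq_div {a b s t : ℝ} (hs : 0 < s) (ht : 0 < t) :
    2 * (a * b) ≤ t * (a ^ 2 / s) + s * (b ^ 2 / t) := by
  have hsq : t * (a ^ 2 / s) + s * (b ^ 2 / t) - 2 * (a * b) = (a * t - b * s) ^ 2 / (s * t) := by
    field_simp
    ring
  have : 0 ≤ (a * t - b * s) ^ 2 / (s * t) := by positivity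
  linarith

section Positivity

variable {α : Type*} [MeasurableSpace α] {μ : Measure α}

lemma integral_pos_of_nonneg_of_not_ae_eq_zero {f : α → ℝ} (hf₀ : ∀ᵐ x ∂μ, 0 ≤ f x)
    (hf : Integrable f μ) (hne : ¬ ∀ᵐ x ∂μ, f x = 0) : 0 < ∫ x, f x ∂μ :=
  (integral_nonneg_of_ae hf₀).lt_of_ne fun h =>
    hne ((integral_eq_zero_iff_of_nonneg_ae hf₀ hf).1 h.symm)

lemma not_ae_eq_zero_of_ae_pos (hμ : μ ≠ 0) {f : α → ℝ} (hf : ∀ᵐ x ∂μ, 0 < f x) :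
    ¬ ∀ᵐ x ∂μ, f x = 0 := fun h0 =>
  haveI := ae_neBot.2 hμ
  let ⟨_, hpos, hzero⟩ := (hf.and h0).exists
  hpos.ne' hzero

lemma integral_mul_mul_self_pos {w f : α → ℝ} (hw : ∀ᵐ x ∂μ, 0 < w x)
    (hint : Integrable (fun x => w x * (f x * f x)) μ) (hf : ¬ ∀ᵐ x ∂μ, f x = 0) :
    0 < ∫ x, w x * (f x * f x) ∂μ := by
  refine integral_pos_of_nonneg_of_not_ae_eq_zero
    (hw.mono fun x hx => mul_nonneg hx.le (mul_self_nonneg _)) hint fun h0 => hf ?_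
  filter_upwards [h0, hw] with x h0x hwx
  exact mul_self_eq_zero.1 ((mul_eq_zero.1 h0x).resolve_left hwx.ne')

end Positivity

def nonlocalOp {α : Type*} [MeasurableSpace α] (K : α → α → ℝ) (μ : Measure α)
    (f : α → ℝ) (x : α) : ℝ :=
  ∫ y, K x y * (f y - f x) ∂μ

def nonlocalForm {α : Type*} [MeasurableSpace α] (K : α → α → ℝ) (μ : Measure α)
    (f g : α → ℝ) : ℝ :=
  ∫ x, ∫ y, K x y * ((f y - f x) * (g y - g x)) ∂μ ∂μ

def rayleighQuotient {α : Type*} [MeasurableSpace α] (K : α → α → ℝ) (μ : Measure α)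
    (β γ : α → ℝ) (d : ℝ) (ψ : α → ℝ) : ℝ :=
  (d / 2 * nonlocalForm K μ ψ ψ + ∫ x, γ x * (ψ x * ψ x) ∂μ) / ∫ x, β x * (ψ x * ψ x) ∂μ

section NonlocalKernel

variable {α : Type*} [MeasurableSpace α] {μ : Measure α} {K : α → α → ℝ}

lemma ae_memLp_top_kernel_section [SFinite μ] (hK : MemLp (uncurry K) ∞ (μ.prod μ)) :
    ∀ᵐ x ∂μ, MemLp (K x) ∞ μ := by
  filter_upwards [hK.1.prodMk_left, Measure.ae_ae_of_ae_prod hK.ae_norm_le_of_top]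
    with x hmeas hbound
  exact memLp_top_of_bound hmeas _ hbound

lemma memLp_top_integral_kernel [IsFiniteMeasure μ] (hK : MemLp (uncurry K) ∞ (μ.prod μ)) :
    MemLp (fun x => ∫ y, K x y ∂μ) ∞ μ := by
  refine memLp_top_of_bound hK.1.integral_prod_right'
    ((eLpNorm (uncurry K) ∞ (μ.prod μ)).toReal * μ.real univ) ?_
  filter_upwards [Measure.ae_ae_of_ae_prod hK.ae_norm_le_of_top] with x hx
  exact norm_integral_le_of_norm_le_const hx

lemma ae_integrable_kernel_mul [SFinite μ] (hK : MemLp (uncurry K) ∞ (μ.prod μ)) {f : α → ℝ}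
    (hf : Integrable f μ) : ∀ᵐ x ∂μ, Integrable (fun y => K x y * f y) μ := by
  filter_upwards [ae_memLp_top_kernel_section hK] with x hx
  exact hf.mul_of_top_right hx

lemma integrable_kernel_mul_prod (hK : MemLp (uncurry K) ∞ (μ.prod μ)) {F : α × α → ℝ}
    (hF : Integrable F (μ.prod μ)) : Integrable (fun p => K p.1 p.2 * F p) (μ.prod μ) :=
  hF.mul_of_top_right hK

lemma ae_nonlocalOp_eq [IsFiniteMeasure μ] (hK : MemLp (uncurry K) ∞ (μ.prod μ)) {f : α → ℝ}
    (hf : Integrable f μ) :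
    ∀ᵐ x ∂μ, nonlocalOp K μ f x = ∫ y, K x y * f y ∂μ - (∫ y, K x y ∂μ) * f x := by
  filter_upwards [ae_integrable_kernel_mul hK hf,
    ae_integrable_kernel_mul hK (integrable_const 1)] with x hKf hK1
  simp only [mul_one] at hK1
  rw [nonlocalOp, ← integral_mul_const, ← integral_sub hKf (hK1.mul_const _)]
  simp only [mul_sub]

lemma integral_integral_kernel_mul [SFinite μ] (hK : MemLp (uncurry K) ∞ (μ.prod μ))
    {F : α × α → ℝ} (hF : Integrable F (μ.prod μ)) :
    ∫ x, ∫ y, K x y * F (x, y) ∂μ ∂μ = ∫ p, K p.1 p.2 * F p ∂μ.prod μ :=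
  (integral_prod _ (integrable_kernel_mul_prod hK hF)).symm

lemma nonlocalOp_mul (K : α → α → ℝ) (μ : Measure α) (f g : α → ℝ) (x : α) :
    nonlocalOp K μ f x * g x = ∫ y, K x y * ((f y - f x) * g x) ∂μ := by
  simp only [nonlocalOp, ← integral_mul_const, mul_assoc]

lemma integrable_sub_mul_prod [IsFiniteMeasure μ] {f g : α → ℝ} (hf : Integrable f μ)
    (hg : Integrable g μ) (hfg : Integrable (fun x => f x * g x) μ) :
    Integrable (fun p : α × α => (f p.2 - f p.1) * g p.1) (μ.prod μ) := by
  refine ((hg.mul_prod hf).sub (hfg.comp_fst μ)).congr (Eventually.of_forall fun p => ?_)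
  simp only [Pi.sub_apply]
  ring

lemma integrable_nonlocalOp_mul [IsFiniteMeasure μ] (hK : MemLp (uncurry K) ∞ (μ.prod μ))
    {f g : α → ℝ} (hf : Integrable f μ) (hg : Integrable g μ)
    (hfg : Integrable (fun x => f x * g x) μ) :
    Integrable (fun x => nonlocalOp K μ f x * g x) μ := by
  simp only [nonlocalOp_mul]
  exact (integrable_kernel_mul_prod hK (integrable_sub_mul_prod hf hg hfg)).integral_prod_left

lemma integral_nonlocalOp_mul [IsFiniteMeasure μ] (hK : MemLp (uncurry K) ∞ (μ.prod μ))
    (hKs : ∀ x y, K x y = K y x) {f g : α → ℝ} (hf : Integrable f μ) (hg : Integrable g μ)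
    (hfg : Integrable (fun x => f x * g x) μ) :
    ∫ x, nonlocalOp K μ f x * g x ∂μ = -(1 / 2) * nonlocalForm K μ f g := by
  set D : α × α → ℝ := fun p => (f p.2 - f p.1) * g p.1
  have hD : Integrable D (μ.prod μ) := integrable_sub_mul_prod hf hg hfg
  have hD' : Integrable (fun p => D p.swap) (μ.prod μ) := hD.swap
  have hop : ∫ x, nonlocalOp K μ f x * g x ∂μ = ∫ p, K p.1 p.2 * D p ∂μ.prod μ := by
    simp only [nonlocalOp_mul]
    exact integral_integral_kernel_mul hK hD
  have hswap : ∫ p, K p.1 p.2 * D p.swap ∂μ.prod μ = ∫ p, K p.1 p.2 * D p ∂μ.prod μ := by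
    rw [← integral_prod_swap]
    simp only [Prod.fst_swap, Prod.snd_swap, Prod.swap_swap, hKs]
  set E : α × α → ℝ := fun p => (f p.2 - f p.1) * (g p.2 - g p.1)
  have hE : Integrable E (μ.prod μ) := by
    refine (hD.add hD').neg.congr (Eventually.of_forall fun p => ?_)
    simp only [D, E, Pi.neg_apply, Pi.add_apply, Prod.fst_swap, Prod.snd_swap]
    ring
  have hform : nonlocalForm K μ f g
      = -(∫ p, K p.1 p.2 * D p ∂μ.prod μ + ∫ p, K p.1 p.2 * D p.swap ∂μ.prod μ) := by
    rw [← integral_add (integrable_kernel_mul_prod hK hD) (integrable_kernel_mul_prod hK hD'),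
      ← integral_neg, nonlocalForm, integral_integral_kernel_mul hK hE]
    refine integral_congr_ae (Eventually.of_forall fun p => ?_)
    simp only [D, E, Prod.fst_swap, Prod.snd_swap]
    ring
  rw [hform, hswap, hop]
  ring

lemma nonlocalForm_comm (K : α → α → ℝ) (μ : Measure α) (f g : α → ℝ) :
    nonlocalForm K μ f g = nonlocalForm K μ g f := by
  simp only [nonlocalForm, mul_comm (f _ - f _)]

lemma nonlocalForm_self_nonneg (hK₀ : ∀ x y, 0 ≤ K x y) (f : α → ℝ) :
    0 ≤ nonlocalForm K μ f f :=
  integral_nonneg fun _ => integral_nonneg fun _ => mul_nonneg (hK₀ _ _) (mul_self_nonneg _)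

lemma eigenvalue_mul_integral_eq [IsFiniteMeasure μ] (hK : MemLp (uncurry K) ∞ (μ.prod μ))
    (hKs : ∀ x y, K x y = K y x) {β γ f g : α → ℝ} {d m : ℝ} (hγ : MemLp γ ∞ μ)
    (hf : MemLp f 2 μ) (hg : MemLp g 2 μ)
    (heig : ∀ᵐ x ∂μ, -(d * nonlocalOp K μ f x) + γ x * f x = m * β x * f x) :
    m * ∫ x, β x * (f x * g x) ∂μ = d / 2 * nonlocalForm K μ f g + ∫ x, γ x * (f x * g x) ∂μ := by
  have hfg : Integrable (fun x => f x * g x) μ := hf.integrable_mul hg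
  have hf₁ := hf.integrable one_le_two
  have hg₁ := hg.integrable one_le_two
  calc m * ∫ x, β x * (f x * g x) ∂μ
      = ∫ x, (-d * (nonlocalOp K μ f x * g x) + γ x * (f x * g x)) ∂μ := by
        rw [← integral_const_mul]
        refine integral_congr_ae (heig.mono fun x hx => ?_)
        linear_combination -(g x) * hx
    _ = d / 2 * nonlocalForm K μ f g + ∫ x, γ x * (f x * g x) ∂μ := by
        have hγfg : Integrable (fun x => γ x * (f x * g x)) μ := hfg.mul_of_top_right hγ
        rw [integral_add ((integrable_nonlocalOp_mul hK hf₁ hg₁ hfg).const_mul _) hγfg,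
          integral_const_mul,
          integral_nonlocalOp_mul hK hKs hf₁ hg₁ hfg]
        ring

lemma integral_integral_kernel_mul_le [IsFiniteMeasure μ] (hK : MemLp (uncurry K) ∞ (μ.prod μ))
    (hKs : ∀ x y, K x y = K y x) (hK₀ : ∀ x y, 0 ≤ K x y) {φ h ψ : α → ℝ}
    (hφ : Integrable φ μ) (hφpos : ∀ᵐ x ∂μ, 0 < φ x)
    (hh : ∀ᵐ x ∂μ, ∫ y, K x y * φ y ∂μ = h x * φ x)
    (hψ : Integrable ψ μ) (hhψ : Integrable (fun x => h x * ψ x ^ 2) μ) :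
    ∫ x, ∫ y, K x y * (ψ x * ψ y) ∂μ ∂μ ≤ ∫ x, h x * ψ x ^ 2 ∂μ := by
  set F : α × α → ℝ := fun p => K p.1 p.2 * (φ p.2 * (ψ p.1 ^ 2 / φ p.1))
  have hsec : ∀ᵐ x ∂μ, ∫ y, F (x, y) ∂μ = h x * ψ x ^ 2 := by
    filter_upwards [hh, hφpos] with x hx hφx
    simp only [F, ← mul_assoc]
    rw [integral_mul_const, hx]
    field_simp
  have hFm : AEStronglyMeasurable F (μ.prod μ) :=
    hK.1.mul (hφ.1.comp_snd.mul (((hψ.1.aemeasurable.pow_const 2).div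
      hφ.1.aemeasurable).aestronglyMeasurable.comp_fst))
  have hF : Integrable F (μ.prod μ) := by
    refine (integrable_prod_iff hFm).2 ⟨?_, hhψ.congr ?_⟩
    · filter_upwards [ae_integrable_kernel_mul hK hφ] with x hx
      simpa only [F, ← mul_assoc] using hx.mul_const (ψ x ^ 2 / φ x)
    · filter_upwards [hsec, hφpos] with x hx hφx
      rw [← hx]
      refine integral_congr_ae (hφpos.mono fun y hφy => (Real.norm_of_nonneg ?_).symm)
      exact mul_nonneg (hK₀ _ _) (mul_nonneg hφy.le (div_nonneg (sq_nonneg _) hφx.le))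
  have hF' : Integrable (fun p => F p.swap) (μ.prod μ) := hF.swap
  have hpt : ∀ᵐ p ∂μ.prod μ, 2 * (K p.1 p.2 * (ψ p.1 * ψ p.2)) ≤ F p + F p.swap := by
    filter_upwards [Measure.quasiMeasurePreserving_fst.ae hφpos,
      Measure.quasiMeasurePreserving_snd.ae hφpos] with p h₁ h₂
    simp only [F, Prod.fst_swap, Prod.snd_swap, hKs p.2 p.1, ← mul_add, mul_left_comm 2 (K _ _)]
    exact mul_le_mul_of_nonneg_left (two_mul_le_mul_sq_div_add_mul_sq_div h₁ h₂) (hK₀ _ _)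
  calc ∫ x, ∫ y, K x y * (ψ x * ψ y) ∂μ ∂μ
      = (∫ p, 2 * (K p.1 p.2 * (ψ p.1 * ψ p.2)) ∂μ.prod μ) / 2 := by
        rw [integral_integral_kernel_mul hK (hψ.mul_prod hψ), integral_const_mul]
        ring
    _ ≤ (∫ p, (F p + F p.swap) ∂μ.prod μ) / 2 := by
        gcongr ?_ / 2
        exact integral_mono_ae ((integrable_kernel_mul_prod hK (hψ.mul_prod hψ)).const_mul 2)
          (hF.add hF') hpt
    _ = ∫ p, F p ∂μ.prod μ := by
        rw [integral_add hF hF', integral_prod_swap]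
        ring
    _ = ∫ x, h x * ψ x ^ 2 ∂μ := by
        rw [integral_prod _ hF]
        exact integral_congr_ae hsec

lemma integral_nonlocalOp_mul_self_le [IsFiniteMeasure μ]
    (hK : MemLp (uncurry K) ∞ (μ.prod μ)) (hKs : ∀ x y, K x y = K y x)
    (hK₀ : ∀ x y, 0 ≤ K x y) {φ q ψ : α → ℝ} (hφ : Integrable φ μ)
    (hφpos : ∀ᵐ x ∂μ, 0 < φ x) (hq : ∀ᵐ x ∂μ, nonlocalOp K μ φ x = q x * φ x)
    (hqb : MemLp q ∞ μ) (hψ : MemLp ψ 2 μ) :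
    ∫ x, nonlocalOp K μ ψ x * ψ x ∂μ ≤ ∫ x, q x * ψ x ^ 2 ∂μ := by
  set k : α → ℝ := fun x => ∫ y, K x y ∂μ
  have hψ₁ : Integrable ψ μ := hψ.integrable one_le_two
  have hqψ : Integrable (fun x => q x * ψ x ^ 2) μ := hψ.integrable_sq.mul_of_top_right hqb
  have hkψ : Integrable (fun x => k x * ψ x ^ 2) μ :=
    hψ.integrable_sq.mul_of_top_right (memLp_top_integral_kernel hK)
  have hKψψ : Integrable (fun x => ∫ y, K x y * (ψ x * ψ y) ∂μ) μ :=
    (integrable_kernel_mul_prod hK (hψ₁.mul_prod hψ₁)).integral_prod_left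
  have hφ_eq : ∀ᵐ x ∂μ, ∫ y, K x y * φ y ∂μ = (q x + k x) * φ x := by
    filter_upwards [hq, ae_nonlocalOp_eq hK hφ] with x hqx hsplit
    linear_combination hqx - hsplit
  have hψ_eq : ∀ᵐ x ∂μ,
      nonlocalOp K μ ψ x * ψ x = ∫ y, K x y * (ψ x * ψ y) ∂μ - k x * ψ x ^ 2 := by
    filter_upwards [ae_nonlocalOp_eq hK hψ₁] with x hsplit
    simp only [hsplit, mul_left_comm _ (ψ x), integral_const_mul]
    ring
  have hschur := integral_integral_kernel_mul_le hK hKs hK₀ hφ hφpos hφ_eq hψ₁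
    ((hqψ.add hkψ).congr (Eventually.of_forall fun x => (add_mul _ _ _).symm))
  simp only [add_mul] at hschur
  rw [integral_congr_ae hψ_eq, integral_sub hKψψ hkψ]
  rw [integral_add hqψ hkψ] at hschur
  linarith

end NonlocalKernel

section WeightedEigenvalue

variable {α : Type*} [MeasurableSpace α] {μ : Measure α} [IsFiniteMeasure μ]
  {K : α → α → ℝ} {β γ φ : α → ℝ} {d m : ℝ}

theorem eigenvalue_pos (hK : MemLp (uncurry K) ∞ (μ.prod μ)) (hKs : ∀ x y, K x y = K y x)
    (hK₀ : ∀ x y, 0 ≤ K x y) (hd : 0 ≤ d) (hμ : μ ≠ 0) (hβ₀ : ∀ᵐ x ∂μ, 0 ≤ β x)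
    (hγ : MemLp γ ∞ μ) (hγpos : ∀ᵐ x ∂μ, 0 < γ x) (hφ : MemLp φ 2 μ)
    (hφpos : ∀ᵐ x ∂μ, 0 < φ x)
    (heig : ∀ᵐ x ∂μ, -(d * nonlocalOp K μ φ x) + γ x * φ x = m * β x * φ x) :
    0 < m := by
  have hγφ : 0 < ∫ x, γ x * (φ x * φ x) ∂μ :=
    integral_mul_mul_self_pos hγpos ((hφ.integrable_mul hφ).mul_of_top_right hγ)
      (not_ae_eq_zero_of_ae_pos hμ hφpos)
  have hβφ : 0 ≤ ∫ x, β x * (φ x * φ x) ∂μ :=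
    integral_nonneg_of_ae (hβ₀.mono fun x hx => mul_nonneg hx (mul_self_nonneg _))
  have hE := nonlocalForm_self_nonneg (μ := μ) hK₀ φ
  have hmβφ : 0 < m * ∫ x, β x * (φ x * φ x) ∂μ := by
    rw [eigenvalue_mul_integral_eq hK hKs hγ hφ hφ heig]
    positivity
  exact pos_of_mul_pos_left hmβφ hβφ

theorem eigenvalue_unique (hK : MemLp (uncurry K) ∞ (μ.prod μ)) (hKs : ∀ x y, K x y = K y x)
    (hμ : μ ≠ 0) (hβ : MemLp β ∞ μ) (hβpos : ∀ᵐ x ∂μ, 0 < β x) (hγ : MemLp γ ∞ μ)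
    {φ₁ φ₂ : α → ℝ} {m₁ m₂ : ℝ} (hφ₁ : MemLp φ₁ 2 μ) (hφ₂ : MemLp φ₂ 2 μ)
    (hφ₁pos : ∀ᵐ x ∂μ, 0 < φ₁ x) (hφ₂pos : ∀ᵐ x ∂μ, 0 < φ₂ x)
    (heig₁ : ∀ᵐ x ∂μ, -(d * nonlocalOp K μ φ₁ x) + γ x * φ₁ x = m₁ * β x * φ₁ x)
    (heig₂ : ∀ᵐ x ∂μ, -(d * nonlocalOp K μ φ₂ x) + γ x * φ₂ x = m₂ * β x * φ₂ x) :
    m₁ = m₂ := by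
  have h₁ := eigenvalue_mul_integral_eq hK hKs hγ hφ₁ hφ₂ heig₁
  have h₂ := eigenvalue_mul_integral_eq hK hKs hγ hφ₂ hφ₁ heig₂
  rw [nonlocalForm_comm] at h₂
  simp only [mul_comm (φ₂ _)] at h₂
  have hpos : ∀ᵐ x ∂μ, 0 < β x * (φ₁ x * φ₂ x) := by
    filter_upwards [hβpos, hφ₁pos, hφ₂pos] with x hβx h₁x h₂x
    positivity
  have hβφφ : 0 < ∫ x, β x * (φ₁ x * φ₂ x) ∂μ :=
    integral_pos_of_nonneg_of_not_ae_eq_zero (hpos.mono fun _ hx => hx.le)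
      ((hφ₁.integrable_mul hφ₂).mul_of_top_right hβ) (not_ae_eq_zero_of_ae_pos hμ hpos)
  exact mul_right_cancel₀ hβφφ.ne' (h₁.trans h₂.symm)

theorem isLeast_rayleighQuotient (hK : MemLp (uncurry K) ∞ (μ.prod μ))
    (hKs : ∀ x y, K x y = K y x) (hK₀ : ∀ x y, 0 ≤ K x y) (hd : 0 < d) (hμ : μ ≠ 0)
    (hβ : MemLp β ∞ μ) (hβpos : ∀ᵐ x ∂μ, 0 < β x) (hγ : MemLp γ ∞ μ) (hφ : MemLp φ 2 μ)
    (hφpos : ∀ᵐ x ∂μ, 0 < φ x)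
    (heig : ∀ᵐ x ∂μ, -(d * nonlocalOp K μ φ x) + γ x * φ x = m * β x * φ x) :
    IsLeast {r | ∃ ψ, MemLp ψ 2 μ ∧ ¬ (∀ᵐ x ∂μ, ψ x = 0) ∧
      r = rayleighQuotient K μ β γ d ψ} m := by
  have hβψ : ∀ ψ, MemLp ψ 2 μ → ¬ (∀ᵐ x ∂μ, ψ x = 0) → 0 < ∫ x, β x * (ψ x * ψ x) ∂μ :=
    fun ψ hψ hψ0 => integral_mul_mul_self_pos hβpos ((hψ.integrable_mul hψ).mul_of_top_right hβ) hψ0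
  refine ⟨⟨φ, hφ, not_ae_eq_zero_of_ae_pos hμ hφpos, ?_⟩, ?_⟩
  · rw [rayleighQuotient, eq_div_iff (hβψ φ hφ (not_ae_eq_zero_of_ae_pos hμ hφpos)).ne',
      eigenvalue_mul_integral_eq hK hKs hγ hφ hφ heig]
  rintro r ⟨ψ, hψ, hψ0, rfl⟩
  rw [rayleighQuotient, le_div_iff₀ (hβψ ψ hψ hψ0)]
  have hq : ∀ᵐ x ∂μ, nonlocalOp K μ φ x = d⁻¹ * (γ x - m * β x) * φ x := by
    filter_upwards [heig] with x hx
    field_simp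
    linear_combination -hx
  have hψ₁ := hψ.integrable one_le_two
  have hψψ : Integrable (fun x => ψ x * ψ x) μ := hψ.integrable_mul hψ
  have hgs := integral_nonlocalOp_mul_self_le hK hKs hK₀ (hφ.integrable one_le_two) hφpos hq
    ((hγ.sub (hβ.const_mul m)).const_mul d⁻¹) hψ
  have hγψ : Integrable (fun x => γ x * (ψ x * ψ x)) μ := hψψ.mul_of_top_right hγ
  have hβψ' : Integrable (fun x => m * (β x * (ψ x * ψ x))) μ :=
    (hψψ.mul_of_top_right hβ).const_mul m
  simp only [sq, mul_assoc, sub_mul] at hgs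
  rw [integral_nonlocalOp_mul hK hKs hψ₁ hψ₁ hψψ, integral_const_mul,
    integral_sub hγψ hβψ', integral_const_mul] at hgs
  have := mul_le_mul_of_nonneg_left hgs hd.le
  rw [mul_inv_cancel_left₀ hd.ne'] at this
  linarith

end WeightedEigenvalue

section EuclideanDomain

variable {n : ℕ} {Ω : Set (Euc n)} {J f : Euc n → ℝ}

lemma DomainHyp.isFiniteMeasure (hΩ : DomainHyp Ω) : IsFiniteMeasure (volume.restrict Ω) :=
  isFiniteMeasure_restrict.2 hΩ.2.2.measure_lt_top.ne

lemma DomainHyp.restrict_ne_zero (hΩ : DomainHyp Ω) : volume.restrict Ω ≠ 0 := by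
  rw [Ne, Measure.restrict_eq_zero]
  exact (hΩ.1.measure_pos volume hΩ.2.1.nonempty).ne'

lemma RateHyp.ae_pos (hf : RateHyp Ω f) (hΩ : MeasurableSet Ω) :
    ∀ᵐ x ∂volume.restrict Ω, 0 < f x := by
  filter_upwards [ae_restrict_mem hΩ] with x hx
  exact hf.2 x (subset_closure hx)

lemma RateHyp.memLp_top (hf : RateHyp Ω f) (hΩ : DomainHyp Ω) :
    MemLp f ∞ (volume.restrict Ω) := by
  obtain ⟨C, hC⟩ := hΩ.2.2.isCompact_closure.exists_bound_of_continuousOn hf.1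
  refine memLp_top_of_bound ((hf.1.mono subset_closure).aestronglyMeasurable
    hΩ.1.measurableSet) C ?_
  filter_upwards [ae_restrict_mem hΩ.1.measurableSet] with x hx
  exact hC x (subset_closure hx)

lemma KernelHyp.memLp_top (hJ : KernelHyp J Ω) (hΩ : DomainHyp Ω) :
    MemLp (uncurry fun x y : Euc n => J (x - y)) ∞
      ((volume.restrict Ω).prod (volume.restrict Ω)) := by
  have hcl := hΩ.2.2.isCompact_closure
  have hcont : Continuous fun p : Euc n × Euc n => J (p.1 - p.2) :=
    hJ.1.comp (continuous_fst.sub continuous_snd)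
  obtain ⟨C, hC⟩ := (hcl.prod hcl).exists_bound_of_continuousOn hcont.continuousOn
  refine memLp_top_of_bound hcont.aestronglyMeasurable C ?_
  rw [Measure.prod_restrict]
  filter_upwards [ae_restrict_mem (hΩ.1.measurableSet.prod hΩ.1.measurableSet)] with p hp
  exact hC p ⟨subset_closure hp.1, subset_closure hp.2⟩

lemma KernelHyp.symm (hJ : KernelHyp J Ω) (x y : Euc n) : J (x - y) = J (y - x) := by
  rw [← neg_sub, hJ.2.2.1]

end EuclideanDomain

/-- properties of the weighted eigenvalue problem
−d_I ∫_Ω J(x−y)(φ(y)−φ(x)) dy + γ(x)φ(x) = μ β(x) φ(x): positivity, uniqueness and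
variational characterization of the principal eigenvalue. -/
theorem weighted_eigenvalue {n : ℕ} (J : Euc n → ℝ) (Ω : Set (Euc n))
    (β γ : Euc n → ℝ) (hΩ : DomainHyp Ω) (hJ : KernelHyp J Ω)
    (hβ : RateHyp Ω β) (hγ : RateHyp Ω γ)
    (dI : ℝ) (hdI : 0 < dI)
    (μp : ℝ) (φ : Euc n → ℝ)
    (hφmem : MemLp φ 2 (volume.restrict Ω))
    (hφpos : ∀ᵐ x ∂(volume.restrict Ω), 0 < φ x)
    (heig : ∀ᵐ x ∂(volume.restrict Ω),
      -(dI * (∫ y in Ω, J (x - y) * (φ y - φ x))) + γ x * φ x = μp * β x * φ x) :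
    0 < μp ∧
    (∀ (μ₁ μ₂ : ℝ) (φ₁ φ₂ : Euc n → ℝ),
      MemLp φ₁ 2 (volume.restrict Ω) → MemLp φ₂ 2 (volume.restrict Ω) →
      (∀ᵐ x ∂(volume.restrict Ω), 0 < φ₁ x) →
      (∀ᵐ x ∂(volume.restrict Ω), 0 < φ₂ x) →
      (∀ᵐ x ∂(volume.restrict Ω),
        -(dI * (∫ y in Ω, J (x - y) * (φ₁ y - φ₁ x))) + γ x * φ₁ x = μ₁ * β x * φ₁ x) →
      (∀ᵐ x ∂(volume.restrict Ω),
        -(dI * (∫ y in Ω, J (x - y) * (φ₂ y - φ₂ x))) + γ x * φ₂ x = μ₂ * β x * φ₂ x) →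
      μ₁ = μ₂) ∧
    μp = sInf { r : ℝ | ∃ ψ : Euc n → ℝ, MemLp ψ 2 (volume.restrict Ω) ∧
      ¬ (∀ᵐ x ∂(volume.restrict Ω), ψ x = 0) ∧
      r = (dI / 2 * (∫ x in Ω, ∫ y in Ω, J (x - y) * (ψ y - ψ x) ^ 2)
            + ∫ x in Ω, γ x * ψ x ^ 2) / (∫ x in Ω, β x * ψ x ^ 2) } := by
  have := hΩ.isFiniteMeasure
  have hK := hJ.memLp_top hΩ
  have hK₀ : ∀ x y : Euc n, 0 ≤ J (x - y) := fun x y => hJ.2.2.2.1 _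
  have hμ := hΩ.restrict_ne_zero
  have hβpos := hβ.ae_pos hΩ.1.measurableSet
  have hγpos := hγ.ae_pos hΩ.1.measurableSet
  have hβb := hβ.memLp_top hΩ
  have hγb := hγ.memLp_top hΩ
  refine ⟨eigenvalue_pos hK hJ.symm hK₀ hdI.le hμ (hβpos.mono fun _ hx => hx.le) hγb hγpos
      hφmem hφpos heig,
    fun μ₁ μ₂ φ₁ φ₂ h₁ h₂ h₁pos h₂pos heig₁ heig₂ =>
      eigenvalue_unique hK hJ.symm hμ hβb hβpos hγb h₁ h₂ h₁pos h₂pos heig₁ heig₂, ?_⟩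
  -- with the squares written as products, this is the set of `isLeast_rayleighQuotient`
  -- after unfolding `rayleighQuotient` and `nonlocalForm`
  simp only [sq]
  exact (isLeast_rayleighQuotient hK hJ.symm hK₀ hdI hμ hβb hβpos hγb hφmem hφpos
    heig).csInf_eq.symm
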